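/- In M₂(ℂ), let E₁₁ = [[1,0],[0,0]], let T = [[1,i],[−i,1]], and let S be the linear span of {I, E₁₁, T}. Let φ : M₂(ℂ) → M₂(ℂ) be the diagonal compression φ([[a,b],[c,d]]) = [[a,0],[0,d]]. Then every UCP map ψ : M₂(ℂ) → M₂(ℂ) satisfying ψ(x) = φ(x) for all x ∈ S equals φ on all of M₂(ℂ); that is, φ|_S has a unique CP-extension to M₂(ℂ). -/

import Mathlib

/-!
The hypotheses pin down `ψ` on the diagonal matrix units (`ψ E₁₁ = E₁₁`, and `ψ E₂₂ = E₂₂`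
by unitality), and `ψ T = 1` forces `ψ E₁₂ = ψ E₂₁ =: X`. Complete positivity applied to the
positive block matrix `[[x⋆x, x⋆y], [y⋆x, y⋆y]]` shows that a zero diagonal entry of `ψ (x⋆x)`
kills the corresponding row of `ψ (x⋆y)`. With `x = E₁₁, y = E₁₂` this kills the second row of
`X`, with `x = E₂₂, y = E₂₁` its first row; so `X = 0` and `ψ` is the diagonal compression.
-/

open Filter Topology

noncomputable section

/-- A ℂ-linear map between star algebras is *completely positive* (CP) if, for every `n`, the
induced entrywise map on `n × n` matrices sends positive elements (i.e. elements of the form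
`star N * N`, which are exactly the positive elements when the algebras are C⋆-algebras)
to positive elements. -/
def IsCPMap {A B : Type*} [Ring A] [StarRing A] [Module ℂ A]
    [Ring B] [StarRing B] [Module ℂ B] (φ : A →ₗ[ℂ] B) : Prop :=
  ∀ (n : ℕ) (M : Matrix (Fin n) (Fin n) A),
    (∃ N : Matrix (Fin n) (Fin n) A, M = star N * N) →
    ∃ P : Matrix (Fin n) (Fin n) B, M.map φ = star P * P

/-- A *unital completely positive* (UCP) map. -/
def IsUCPMap {A B : Type*} [Ring A] [StarRing A] [Module ℂ A]
    [Ring B] [StarRing B] [Module ℂ B] (φ : A →ₗ[ℂ] B) : Prop :=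
  IsCPMap φ ∧ φ 1 = 1

namespace Matrix

theorem conjTranspose_mul_self_apply_eq_zero {m n R : Type*} [Fintype m]
    [PartialOrder R] [NonUnitalRing R] [StarRing R] [StarOrderedRing R] [NoZeroDivisors R]
    {A : Matrix m n R} {i : n} (h : (Aᴴ * A) i i = 0) (j : n) : (Aᴴ * A) i j = 0 := by
  have hcol : (fun k => A k i) = 0 := by
    rw [← dotProduct_star_self_eq_zero]
    simpa [mul_apply, dotProduct] using h
  simp [mul_apply, fun k => congr_fun hcol k]

theorem comp_star {I J R : Type*} [Star R] (M : Matrix I I (Matrix J J R)) :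
    comp I I J J R (star M) = (comp I I J J R M)ᴴ :=
  rfl

theorem star_mul_self_apply_apply_eq_zero {I J R : Type*} [Fintype I] [Fintype J]
    [PartialOrder R] [NonUnitalRing R] [StarRing R] [StarOrderedRing R] [NoZeroDivisors R]
    {P : Matrix I I (Matrix J J R)} {i : I} {k : J} (h : (star P * P) i i k k = 0)
    (j : I) (l : J) : (star P * P) i j k l = 0 := by
  have hcomp : comp I I J J R (star P * P) = (comp I I J J R P)ᴴ * comp I I J J R P := by
    rw [← comp_star, ← compRingEquiv_apply, map_mul]
    rfl
  have hentry := congr_fun₂ hcomp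
  exact (hentry (i, k) (j, l)).trans <|
    conjTranspose_mul_self_apply_eq_zero ((hentry (i, k) (i, k)).symm.trans h) (j, l)

end Matrix

open Matrix

open scoped ComplexOrder in
theorem IsCPMap.apply_star_mul_apply_eq_zero {A m : Type*} [Ring A] [StarRing A] [Module ℂ A]
    [Fintype m] [DecidableEq m] {ψ : A →ₗ[ℂ] Matrix m m ℂ} (hψ : IsCPMap ψ) {x : A} {k : m}
    (hk : ψ (star x * x) k k = 0) (y : A) (l : m) : ψ (star x * y) k l = 0 := by
  obtain ⟨P, hP⟩ := hψ 2 !![star x * x, star x * y; star y * x, star y * y]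
    ⟨!![x, y; 0, 0], by ext i j; fin_cases i <;> fin_cases j <;> simp [mul_apply, star_apply]⟩
  have hblock := congr_fun₂ hP
  refine (congr_fun₂ (hblock 0 1) k l).trans (star_mul_self_apply_apply_eq_zero ?_ 1 l)
  simpa using (congr_fun₂ (hblock 0 0) k k).symm.trans hk

theorem IsCPMap.apply_single_apply_eq_zero {n m : Type*} [Fintype n] [DecidableEq n]
    [Fintype m] [DecidableEq m] {ψ : Matrix n n ℂ →ₗ[ℂ] Matrix m m ℂ} (hψ : IsCPMap ψ)
    {i : n} {k : m} (hk : ψ (single i i 1) k k = 0) (j : n) (l : m) :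
    ψ (single i j 1) k l = 0 := by
  have h := hψ.apply_star_mul_apply_eq_zero (x := single i i 1) (k := k) (y := single i j 1)
  rw [star_eq_conjTranspose, conjTranspose_single] at h
  simp only [star_one, single_mul_single_same, mul_one] at h
  exact h hk l

theorem Matrix.linearMap_fin_two_apply_of_single {R : Type*} [CommSemiring R]
    {ψ : Matrix (Fin 2) (Fin 2) R →ₗ[R] Matrix (Fin 2) (Fin 2) R}
    (h00 : ψ (single 0 0 1) = single 0 0 1) (h11 : ψ (single 1 1 1) = single 1 1 1)
    (h01 : ψ (single 0 1 1) = 0) (h10 : ψ (single 1 0 1) = 0) (M : Matrix (Fin 2) (Fin 2) R) :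
    ψ M = !![M 0 0, 0; 0, M 1 1] := by
  have hsingle (i j : Fin 2) : single i j (M i j) = M i j • single i j 1 := by
    rw [smul_single, smul_eq_mul, mul_one]
  conv_lhs => rw [matrix_eq_sum_single M]
  simp only [Fin.sum_univ_two, hsingle, map_add, map_smul, h00, h11, h01, h10]
  ext i j; fin_cases i <;> fin_cases j <;> simp

/-- In `M₂(ℂ)`, let `S` be the span of `{I, E₁₁, T}` where
`T = [[1, i], [−i, 1]]`, and let `φ` be the diagonal compression. Then every UCP map
`ψ : M₂(ℂ) → M₂(ℂ)` agreeing with `φ` on `S` equals `φ`; that is, `φ|_S` has a unique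
CP-extension to `M₂(ℂ)`. -/
theorem diagonal_compression_unique_cp_extension
    (E₁₁ T : Matrix (Fin 2) (Fin 2) ℂ)
    (hE : E₁₁ = !![1, 0; 0, 0]) (hT : T = !![1, Complex.I; -Complex.I, 1])
    (S : Submodule ℂ (Matrix (Fin 2) (Fin 2) ℂ))
    (hS : S = Submodule.span ℂ {(1 : Matrix (Fin 2) (Fin 2) ℂ), E₁₁, T})
    (φ : Matrix (Fin 2) (Fin 2) ℂ →ₗ[ℂ] Matrix (Fin 2) (Fin 2) ℂ)
    (hφ : ∀ M : Matrix (Fin 2) (Fin 2) ℂ, φ M = !![M 0 0, 0; 0, M 1 1]) :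
    ∀ ψ : Matrix (Fin 2) (Fin 2) ℂ →ₗ[ℂ] Matrix (Fin 2) (Fin 2) ℂ,
      IsUCPMap ψ → (∀ x ∈ S, ψ x = φ x) → ψ = φ := by
  intro ψ ⟨hcp, hunit⟩ hag
  have hagree : ∀ x ∈ ({1, E₁₁, T} : Set _), ψ x = φ x := fun x hx =>
    hag x (hS ▸ Submodule.subset_span hx)
  have h00 : ψ (single 0 0 1) = single 0 0 1 := by
    have hE' : E₁₁ = single 0 0 1 := by ext i j; fin_cases i <;> fin_cases j <;> simp [hE]
    rw [← hE', hagree E₁₁ (by simp), hφ, hE']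
    ext i j; fin_cases i <;> fin_cases j <;> simp
  have h11 : ψ (single 1 1 1) = single 1 1 1 := by
    have h : (single 1 1 1 : Matrix (Fin 2) (Fin 2) ℂ) = 1 - single 0 0 1 := by
      ext i j; fin_cases i <;> fin_cases j <;> simp
    rw [h, map_sub, hunit, h00]
  have hsymm : ψ (single 1 0 1) = ψ (single 0 1 1) := by
    have hψT : ψ T = 1 := by
      rw [hagree T (by simp), hφ, hT]
      ext i j; fin_cases i <;> fin_cases j <;> simp
    have hT' : T = 1 + Complex.I • (single 0 1 1 - single 1 0 1) := by
      ext i j; fin_cases i <;> fin_cases j <;> simp [hT]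
    rw [hT', map_add, hunit, map_smul, map_sub, add_eq_left, smul_eq_zero] at hψT
    exact (sub_eq_zero.mp (hψT.resolve_left Complex.I_ne_zero)).symm
  have h01 : ψ (single 0 1 1) = 0 := by
    ext k l
    fin_cases k
    · rw [← hsymm]
      exact hcp.apply_single_apply_eq_zero (by simp [h11]) 0 l
    · exact hcp.apply_single_apply_eq_zero (by simp [h00]) 1 l
  exact LinearMap.ext fun M =>
    (linearMap_fin_two_apply_of_single h00 h11 h01 (hsymm.trans h01) M).trans (hφ M).symm
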